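/- (Stevanović) Let G = (V(G), E(G)) be a connected finite simple graph on at least 2 vertices with largest adjacency eigenvalue λ₀(G), and let v be the principal eigenvector of G, i.e., the entrywise positive eigenvector of the adjacency matrix with eigenvalue λ₀(G) normalized to Euclidean norm 1. For each vertex x of G, let G - x denote the subgraph of G induced on V(G) \ {x}, with largest eigenvalue λ₀(G - x). Then ((1 - 2v_x²)/(1 - v_x²))·λ₀(G) ≤ λ₀(G - x) ≤ λ₀(G), where v_x denotes the x-coordinate of v. -/

import Mathlib

/-!
Both bounds come from the Rayleigh principle `w ⬝ᵥ A w ≤ λ₀(A) ‖w‖²` for symmetric `A`.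
For the upper bound, apply it in `G` to the extension by zero of an eigenvector of `G - x`,
which has the same quadratic form. For the lower bound, apply it in `G - x` to the restriction
of `v`: its extension by zero is `v - v_x e_x`, whose quadratic form is `λ₀(G) (1 - 2 v_x²)`
because `A v = λ₀(G) v` and `A_xx = 0`, while its squared norm is `1 - v_x²`.
-/

open scoped Classical

/-- The adjacency matrix of a simple graph, over `ℝ`. -/
noncomputable def adjMat {V : Type*} [Fintype V] (G : SimpleGraph V) : Matrix V V ℝ :=
  Matrix.of fun i j => if G.Adj i j then (1 : ℝ) else 0

/-- The smallest (real) eigenvalue of a matrix. -/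
noncomputable def matMinEig {V : Type*} [Fintype V] (A : Matrix V V ℝ) : ℝ :=
  sInf {μ : ℝ | ∃ v : V → ℝ, v ≠ 0 ∧ A.mulVec v = μ • v}

/-- The smallest eigenvalue of a graph. -/
noncomputable def minEig {V : Type*} [Fintype V] (G : SimpleGraph V) : ℝ :=
  matMinEig (adjMat G)

/-- The degree (valency) of a vertex. -/
noncomputable def deg {V : Type*} [Fintype V] (G : SimpleGraph V) (v : V) : ℕ :=
  (G.neighborSet v).ncard

/-- The largest (real) eigenvalue of a matrix. -/
noncomputable def matMaxEig {V : Type*} [Fintype V] (A : Matrix V V ℝ) : ℝ :=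
  sSup {μ : ℝ | ∃ v : V → ℝ, v ≠ 0 ∧ A.mulVec v = μ • v}

/-- The largest eigenvalue of a graph. -/
noncomputable def maxEig {V : Type*} [Fintype V] (G : SimpleGraph V) : ℝ :=
  matMaxEig (adjMat G)

theorem Function.update_zero_eq_sub_single {n R : Type*} [DecidableEq n] [AddGroup R]
    (v : n → R) (x : n) : Function.update v x 0 = v - Pi.single x (v x) := by
  ext i
  by_cases h : i = x <;> simp [h]

theorem Function.extend_subtypeVal_domRestrict_zero {V R : Type*} [Zero R] (s : Set V)
    (v : V → R) :
    Function.extend Subtype.val (s.domRestrict v) 0 = s.indicator v := by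
  ext i
  by_cases h : i ∈ s
  · rw [Set.indicator_of_mem h]
    exact Subtype.val_injective.extend_apply (s.domRestrict v) 0 ⟨i, h⟩
  · rw [Set.indicator_of_notMem h, Function.extend_apply' _ _ _ fun ⟨j, hj⟩ => h (hj ▸ j.2)]
    rfl

namespace Matrix

variable {n R : Type*} [Fintype n]

theorem setOf_exists_mulVec_eq_smul_eq_spectrum [Field R] [DecidableEq n] (A : Matrix n n R) :
    {μ : R | ∃ v : n → R, v ≠ 0 ∧ A *ᵥ v = μ • v} = spectrum R A := by
  ext μ
  rw [Set.mem_ofPred_eq, ← spectrum_toLin', ← Module.End.hasEigenvalue_iff_mem_spectrum,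
    Module.End.hasEigenvalue_iff, Submodule.ne_bot_iff]
  simp [and_comm]

section Submatrix

variable [CommSemiring R] {m : Type*} [Fintype m] {e : m → n}

theorem extend_zero_dotProduct (he : e.Injective) (w : m → R) (f : n → R) :
    Function.extend e w 0 ⬝ᵥ f = w ⬝ᵥ (f ∘ e) := by
  refine (Fintype.sum_of_injective e he _ _ (fun i hi => ?_) (fun i => ?_)).symm
  · simp [Function.extend_apply' _ _ _ fun ⟨j, hj⟩ => hi ⟨j, hj⟩]
  · simp [he.extend_apply]

theorem extend_zero_dotProduct_self (he : e.Injective) (w : m → R) :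
    Function.extend e w 0 ⬝ᵥ Function.extend e w 0 = w ⬝ᵥ w := by
  rw [extend_zero_dotProduct he, Function.extend_comp he]

theorem dotProduct_mulVec_submatrix (he : e.Injective) (A : Matrix n n R) (w : m → R) :
    w ⬝ᵥ (A.submatrix e e *ᵥ w) =
      Function.extend e w 0 ⬝ᵥ (A *ᵥ Function.extend e w 0) := by
  rw [extend_zero_dotProduct he]
  congr 1
  ext i
  simp only [Function.comp_apply, mulVec, dotProduct_comm (A (e i)), extend_zero_dotProduct he,
    dotProduct_comm w]
  rfl

end Submatrix

theorem update_zero_dotProduct_self [CommRing R] [DecidableEq n] (v : n → R) (x : n) :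
    Function.update v x 0 ⬝ᵥ Function.update v x 0 = v ⬝ᵥ v - v x ^ 2 := by
  rw [Function.update_zero_eq_sub_single, sub_dotProduct, dotProduct_sub, dotProduct_sub,
    single_dotProduct, dotProduct_single, single_dotProduct, Pi.single_eq_same]
  ring

theorem IsSymm.dotProduct_mulVec_update_zero [CommRing R] [DecidableEq n]
    {A : Matrix n n R} (hA : A.IsSymm) {x : n} (hx : A x x = 0) {v : n → R} {μ : R}
    (hv : A *ᵥ v = μ • v) :
    Function.update v x 0 ⬝ᵥ (A *ᵥ Function.update v x 0) =
      μ * (v ⬝ᵥ v - 2 * v x ^ 2) := by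
  have hrow : Pi.single x (v x) ⬝ᵥ (A *ᵥ v) = μ * v x ^ 2 := by
    simp [hv, sq]
  have hcol : v ⬝ᵥ (A *ᵥ Pi.single x (v x)) = μ * v x ^ 2 := by
    rw [dotProduct_mulVec, ← mulVec_transpose, hA.eq, dotProduct_comm, hrow]
  have hdiag : Pi.single x (v x) ⬝ᵥ (A *ᵥ Pi.single x (v x)) = 0 := by
    simp [mulVec_single, hx]
  rw [Function.update_zero_eq_sub_single, mulVec_sub, sub_dotProduct, dotProduct_sub,
    dotProduct_sub, hrow, hcol, hdiag, hv, dotProduct_smul, smul_eq_mul]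
  ring

section Real

variable {A : Matrix n n ℝ}

open scoped MatrixOrder in
theorem IsHermitian.dotProduct_mulVec_le_matMaxEig (hA : A.IsHermitian) (w : n → ℝ) :
    w ⬝ᵥ (A *ᵥ w) ≤ matMaxEig A * (w ⬝ᵥ w) := by
  have hspec : ∀ μ ∈ spectrum ℝ A, μ ≤ matMaxEig A := fun μ hμ => by
    rw [matMaxEig, setOf_exists_mulVec_eq_smul_eq_spectrum]
    exact le_csSup (finite_spectrum A).bddAbove hμ
  have hpsd := (le_iff.mp (le_algebraMap_of_spectrum_le hspec hA)).dotProduct_mulVec_nonneg w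
  rw [Algebra.algebraMap_eq_smul_one, sub_mulVec, smul_mulVec, one_mulVec, dotProduct_sub,
    dotProduct_smul, star_trivial, smul_eq_mul] at hpsd
  linarith

theorem IsHermitian.matMaxEig_le [Nonempty n] (hA : A.IsHermitian) {c : ℝ}
    (h : ∀ w, w ⬝ᵥ (A *ᵥ w) ≤ c * (w ⬝ᵥ w)) : matMaxEig A ≤ c := by
  refine csSup_le ?_ ?_
  · rw [setOf_exists_mulVec_eq_smul_eq_spectrum, hA.spectrum_real_eq_range_eigenvalues]
    exact Set.range_nonempty _
  · rintro μ ⟨w, hw, hμ⟩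
    have hpos : 0 < w ⬝ᵥ w := by simpa using dotProduct_star_self_pos_iff.mpr hw
    have := h w
    rw [hμ, dotProduct_smul, smul_eq_mul] at this
    exact le_of_mul_le_mul_right this hpos

theorem IsHermitian.matMaxEig_submatrix_le {m : Type*} [Fintype m] [Nonempty m]
    (hA : A.IsHermitian) {e : m → n} (he : e.Injective) :
    matMaxEig (A.submatrix e e) ≤ matMaxEig A := by
  refine (hA.submatrix e).matMaxEig_le fun w => ?_
  rw [dotProduct_mulVec_submatrix he, ← extend_zero_dotProduct_self he w]
  exact hA.dotProduct_mulVec_le_matMaxEig _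

end Real

end Matrix

section Graph

open Matrix

variable {V : Type*} [Fintype V]

theorem adjMat_isHermitian (G : SimpleGraph V) : (adjMat G).IsHermitian := by
  ext i j
  simp only [Matrix.conjTranspose_apply, adjMat, Matrix.of_apply, star_trivial, G.adj_comm]

theorem adjMat_induce (G : SimpleGraph V) (s : Set V) [Fintype s] :
    adjMat (G.induce s) = (adjMat G).submatrix Subtype.val Subtype.val :=
  rfl

theorem maxEig_induce_le (G : SimpleGraph V) (s : Set V) [Fintype s] [Nonempty s] :
    maxEig (G.induce s) ≤ maxEig G := by
  rw [maxEig, adjMat_induce]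
  exact (adjMat_isHermitian G).matMaxEig_submatrix_le Subtype.val_injective

theorem mul_le_maxEig_induce_erase_mul [DecidableEq V] (G : SimpleGraph V) {v : V → ℝ}
    {μ : ℝ} (hv : adjMat G *ᵥ v = μ • v) (x : V) :
    μ * (v ⬝ᵥ v - 2 * v x ^ 2) ≤
      maxEig (G.induce ↑(Finset.univ.erase x)) * (v ⬝ᵥ v - v x ^ 2) := by
  set u := (↑(Finset.univ.erase x) : Set V).domRestrict v
  have hext : Function.extend Subtype.val u 0 = Function.update v x 0 := by
    rw [Function.extend_subtypeVal_domRestrict_zero]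
    ext i
    by_cases h : i = x <;> simp [h]
  have hquad : u ⬝ᵥ (adjMat (G.induce ↑(Finset.univ.erase x)) *ᵥ u) =
      μ * (v ⬝ᵥ v - 2 * v x ^ 2) := by
    rw [adjMat_induce, dotProduct_mulVec_submatrix Subtype.val_injective, hext]
    exact (isHermitian_iff_isSymm.mp (adjMat_isHermitian G)).dotProduct_mulVec_update_zero
      (by simp [adjMat]) hv
  have hnorm : u ⬝ᵥ u = v ⬝ᵥ v - v x ^ 2 := by
    rw [← extend_zero_dotProduct_self Subtype.val_injective, hext, update_zero_dotProduct_self]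
  rw [← hquad, ← hnorm]
  exact (adjMat_isHermitian _).dotProduct_mulVec_le_matMaxEig u

end Graph

theorem stmt14_general {n : ℕ} (hn : 2 ≤ n) (G : SimpleGraph (Fin n))
    (v : Fin n → ℝ) (hpos : ∀ x, 0 < v x) (hnorm : ∑ x, (v x) ^ 2 = 1)
    (heig : (adjMat G).mulVec v = maxEig G • v) (x : Fin n) :
    (1 - 2 * (v x) ^ 2) / (1 - (v x) ^ 2) * maxEig G
        ≤ maxEig (G.induce ↑(Finset.univ.erase x)) ∧
      maxEig (G.induce ↑(Finset.univ.erase x)) ≤ maxEig G := by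
  obtain ⟨y, hyx⟩ := Fintype.exists_ne_of_one_lt_card (by simp; omega) x
  have : Nonempty ↥(↑(Finset.univ.erase x) : Set (Fin n)) := ⟨⟨y, by simp [hyx]⟩⟩
  have hvv : v ⬝ᵥ v = 1 := by simpa [dotProduct, sq] using hnorm
  have hvx : v x ^ 2 < 1 := by
    have := Finset.add_le_sum (fun i _ => sq_nonneg (v i)) (Finset.mem_univ x)
      (Finset.mem_univ y) hyx.symm
    nlinarith [hpos y]
  have key := mul_le_maxEig_induce_erase_mul G heig x
  rw [hvv] at key
  refine ⟨?_, maxEig_induce_le G _⟩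
  rwa [div_mul_eq_mul_div, div_le_iff₀ (by linarith), mul_comm]

/-- **Stevanović.** Let `G` be a connected graph on at least two vertices, with largest
eigenvalue `λ₀(G)` and principal eigenvector `v` (positive, of Euclidean norm 1).
Then for each vertex `x`,
`(1 - 2 v_x²)/(1 - v_x²) · λ₀(G) ≤ λ₀(G - x) ≤ λ₀(G)`. -/
theorem stmt14 {n : ℕ} (hn : 2 ≤ n) (G : SimpleGraph (Fin n)) (hconn : G.Connected)
    (v : Fin n → ℝ) (hpos : ∀ x, 0 < v x) (hnorm : ∑ x, (v x) ^ 2 = 1)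
    (heig : (adjMat G).mulVec v = maxEig G • v) (x : Fin n) :
    (1 - 2 * (v x) ^ 2) / (1 - (v x) ^ 2) * maxEig G
        ≤ maxEig (G.induce ↑(Finset.univ.erase x)) ∧
      maxEig (G.induce ↑(Finset.univ.erase x)) ≤ maxEig G :=
  stmt14_general hn G v hpos hnorm heig x
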